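/- Let d be a nonzero derivation of B(q) of degree 0, and suppose the minimal integer i with d(B^{[j]}) ⊆ B^{[i+j]} for all j ∈ ℤ_{≥0} equals 0. Then d = ad_u + λ D₀ for some u ∈ B(q) and λ ∈ ℂ, where D₀ is the derivation determined by D₀(L_{β,j}) = j L_{β,j}. -/

import Mathlib

variable {B : Type} [LieRing B] [LieAlgebra ℂ B]

/-- The homogeneous component `B_α = span{L_{α,i} : i ∈ ℤ_{≥0}}` of the grading of the
Block type Lie algebra. -/
def blockGrade (L : Module.Basis (ℤ × ℕ) ℂ B) (α : ℤ) : Submodule ℂ B :=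
  Submodule.span ℂ (Set.range fun i : ℕ => L (α, i))

/-- The subspace `B^{[j]} = span{L_{β,k} : β ∈ ℤ, 0 ≤ k ≤ j}` (which is `0` for
`j < 0`). -/
def blockFilt (L : Module.Basis (ℤ × ℕ) ℂ B) (j : ℤ) : Submodule ℂ B :=
  Submodule.span ℂ {x | ∃ (β : ℤ) (k : ℕ), (k : ℤ) ≤ j ∧ x = L (β, k)}

/-- A linear map `d` has degree `α` if `d ≠ 0` and `d(B_β) ⊆ B_{α+β}` for all `β`. -/
def HasDegree (L : Module.Basis (ℤ × ℕ) ℂ B) (d : B →ₗ[ℂ] B) (α : ℤ) : Prop :=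
  d ≠ 0 ∧ ∀ β : ℤ, (blockGrade L β).map d ≤ blockGrade L (α + β)

/-!
Since `d` has degree `0` and preserves the filtration, `d L_{β,j}` is a combination of the
`L_{β,k}` with `k ≤ j`. Read at `L_{α+β,k}` with `k < i`, the derivation identity for
`⁅L_{α,i}, L_{β,0}⁆` relates these coefficients of `d L_{α,i}` and `d L_{α+β,i}`; the choices
`(α, β) = (0, 1), (1, -1), (0, α)` force them to vanish, so `d L_{β,j} = f(β,j) L_{β,j}`.
Read at `L_{α+β,i+j}`, the identity for `⁅L_{α,i}, L_{β,j}⁆` makes `f` additive whenever that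
bracket is nonzero, which forces `f(β,j) = aβ + bj`: the eigenvalue of
`ad((a/q) L_{0,0}) + b D₀` on `L_{β,j}`.
-/

def IsBlockBasis (q : ℕ) (L : Module.Basis (ℤ × ℕ) ℂ B) : Prop :=
  ∀ (α β : ℤ) (i j : ℕ),
    ⁅L (α, i), L (β, j)⁆ =
      (((β * ((i : ℤ) + q) - α * ((j : ℤ) + q)) : ℤ) : ℂ) • L (α + β, i + j)

def BlockAdditive {M : Type*} [Add M] (q : ℕ) (g : ℤ → ℕ → M) : Prop :=
  ∀ (α β : ℤ) (i j : ℕ), β * ((i : ℤ) + q) - α * ((j : ℤ) + q) ≠ 0 →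
    g (α + β) (i + j) = g α i + g β j

namespace BlockAdditive

variable {M : Type*} [AddCommGroup M] {q : ℕ} {g : ℤ → ℕ → M}

theorem eq_zero (hq : 0 < q) (hg : BlockAdditive q g) (h10 : g 1 0 = 0) (h01 : g 0 1 = 0)
    (β : ℤ) (j : ℕ) : g β j = 0 := by
  have hq' : (1 : ℤ) ≤ q := by exact_mod_cast hq
  have g00 : g 0 0 = 0 := by
    simpa [h10] using (hg 1 0 0 0 (by omega)).symm
  have g11 : g 1 1 = 0 := by
    simpa [h10, h01] using hg 1 0 0 1 (by omega)
  have column : ∀ α ≠ 0, ∀ i, g α i = g α 0 := by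
    intro α hα i
    induction i with
    | zero => rfl
    | succ i ih =>
      have hne : (0 : ℤ) * (i + q) - α * ((1 : ℕ) + q) ≠ 0 := by
        simpa using mul_ne_zero hα (by omega : (1 : ℤ) + q ≠ 0)
      simpa [h01, ih] using hg α 0 i 1 hne
  have shift : ∀ α, g (α + 1) 0 = g α 0 := by
    intro α
    by_cases hα : α = 1
    · -- the pair `(1, 0), (1, 0)` has structure constant `0`; go through `(α, 0), (1, 1)`
      have h := hg α 1 0 1 (by subst hα; omega)
      rw [g11, add_zero, column (α + 1) (by omega)] at h
      simpa using h
    · have hne : (1 - α) * q ≠ 0 := mul_ne_zero (sub_ne_zero.mpr (Ne.symm hα)) (by omega)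
      simpa [h10] using hg α 1 0 0 (by convert hne using 1; push_cast; ring)
  have row : ∀ α, g α 0 = 0 := by
    intro α
    induction α using Int.induction_on with
    | zero => exact g00
    | succ n ih => rw [shift, ih]
    | pred n ih => rw [← ih, ← shift, sub_add_cancel]
  by_cases hβ : β = 0
  · subst hβ
    simpa [row, h10, column 1 one_ne_zero] using hg (-1) 1 0 j (by push_cast; omega)
  · rw [column β hβ, row]

theorem eq_linear (hq : 0 < q) (hg : BlockAdditive q g) (β : ℤ) (j : ℕ) :
    g β j = β • g 1 0 + j • g 0 1 := by
  have h := eq_zero (g := fun β j => g β j - (β • g 1 0 + j • g 0 1)) hq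
    (fun α β i j hne => by simp only [hg α β i j hne, add_smul]; abel) (by simp) (by simp) β j
  exact sub_eq_zero.mp h

end BlockAdditive

noncomputable def diagCoeff (L : Module.Basis (ℤ × ℕ) ℂ B) (d : B →ₗ[ℂ] B) (β : ℤ) (j : ℕ) : ℂ :=
  L.repr (d (L (β, j))) (β, j)

section

variable {q : ℕ} {L : Module.Basis (ℤ × ℕ) ℂ B}

theorem repr_eq_zero_of_mem_blockGrade {α : ℤ} {x : B} (hx : x ∈ blockGrade L α) {γ : ℤ}
    (hγ : γ ≠ α) (k : ℕ) : L.repr x (γ, k) = 0 := by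
  have hsub : blockGrade L α ≤ Submodule.span ℂ (L '' {p | p.1 = α}) :=
    Submodule.span_mono (by rintro _ ⟨i, rfl⟩; exact ⟨(α, i), rfl, rfl⟩)
  by_contra h
  exact hγ (L.repr_support_subset_of_mem_span _ (hsub hx) (Finsupp.mem_support_iff.mpr h))

theorem repr_eq_zero_of_mem_blockFilt {j : ℕ} {x : B} (hx : x ∈ blockFilt L j) (γ : ℤ) {k : ℕ}
    (hk : j < k) : L.repr x (γ, k) = 0 := by
  have hsub : blockFilt L j ≤ Submodule.span ℂ (L '' {p | p.2 ≤ j}) :=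
    Submodule.span_mono (by rintro _ ⟨β, k, hk, rfl⟩; exact ⟨(β, k), by simpa using hk, rfl⟩)
  by_contra h
  exact hk.not_ge (L.repr_support_subset_of_mem_span _ (hsub hx) (Finsupp.mem_support_iff.mpr h))

namespace IsBlockBasis

theorem repr_lie (hL : IsBlockBasis q L) (β : ℤ) (j : ℕ) (x : B) (γ : ℤ) (k : ℕ) :
    L.repr ⁅L (β, j), x⁆ (β + γ, j + k) =
      (((γ * ((j : ℤ) + q) - β * ((k : ℤ) + q)) : ℤ) : ℂ) * L.repr x (γ, k) := by
  have key : Finsupp.lapply (β + γ, j + k) ∘ₗ L.repr.toLinearMap ∘ₗ LieAlgebra.ad ℂ B (L (β, j)) =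
      (((γ * ((j : ℤ) + q) - β * ((k : ℤ) + q)) : ℤ) : ℂ) •
        (Finsupp.lapply (γ, k) ∘ₗ L.repr.toLinearMap) := by
    refine L.ext fun ⟨α, i⟩ => ?_
    by_cases h : (α, i) = (γ, k)
    · obtain ⟨rfl, rfl⟩ := Prod.mk.inj h
      simp [hL β α j i]
    · have h' : (β + α, j + i) ≠ (β + γ, j + k) := by simpa using h
      simp [hL β α j i, h, h']
  exact LinearMap.congr_fun key x

theorem repr_lie_of_lt (hL : IsBlockBasis q L) (β : ℤ) {j k : ℕ} (x : B) (γ : ℤ) (hk : k < j) :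
    L.repr ⁅L (β, j), x⁆ (γ, k) = 0 := by
  have key : Finsupp.lapply (γ, k) ∘ₗ L.repr.toLinearMap ∘ₗ LieAlgebra.ad ℂ B (L (β, j)) = 0 := by
    refine L.ext fun ⟨α, i⟩ => ?_
    have h : (β + α, j + i) ≠ (γ, k) := by simp only [ne_eq, Prod.mk.injEq]; omega
    simp [hL β α j i, h]
  exact LinearMap.congr_fun key x

variable {d : B →ₗ[ℂ] B}

theorem repr_derivation (hL : IsBlockBasis q L) (hd : ∀ x y : B, d ⁅x, y⁆ = ⁅d x, y⁆ + ⁅x, d y⁆)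
    (α β : ℤ) (i j : ℕ) (p : ℤ × ℕ) :
    (((β * ((i : ℤ) + q) - α * ((j : ℤ) + q)) : ℤ) : ℂ) * L.repr (d (L (α + β, i + j))) p =
      L.repr ⁅L (α, i), d (L (β, j))⁆ p - L.repr ⁅L (β, j), d (L (α, i))⁆ p := by
  have h := congrArg (fun z => L.repr z p) (hd (L (α, i)) (L (β, j)))
  rw [hL α β i j, ← lie_skew (d (L (α, i)))] at h
  simp only [map_smul, map_add, map_neg, Finsupp.smul_apply, Finsupp.add_apply,
    Finsupp.neg_apply, smul_eq_mul] at h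
  rw [h]
  ring

theorem blockAdditive_diagCoeff (hL : IsBlockBasis q L)
    (hd : ∀ x y : B, d ⁅x, y⁆ = ⁅d x, y⁆ + ⁅x, d y⁆) : BlockAdditive q (diagCoeff L d) := by
  intro α β i j hne
  have h := hL.repr_derivation hd α β i j (α + β, i + j)
  have t := hL.repr_lie β j (d (L (α, i))) α i
  rw [add_comm β α, add_comm j i] at t
  rw [hL.repr_lie α i, t] at h
  refine mul_left_cancel₀ (Int.cast_ne_zero.mpr hne) ?_
  simp only [diagCoeff]
  push_cast at h ⊢
  linear_combination h

theorem repr_derivation_eq_zero_of_lt (hL : IsBlockBasis q L)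
    (hd : ∀ x y : B, d ⁅x, y⁆ = ⁅d x, y⁆ + ⁅x, d y⁆) (α : ℤ) {i k : ℕ} (hk : k < i) :
    L.repr (d (L (α, i))) (α, k) = 0 := by
  set X : ℤ → ℂ := fun a => L.repr (d (L (a, i))) (a, k)
  have E : ∀ a b : ℤ,
      (b * ((i : ℂ) + q) - a * q) * X (a + b) = (b * ((k : ℂ) + q) - a * q) * X a := by
    intro a b
    have h := hL.repr_derivation hd a b i 0 (a + b, k)
    have t := hL.repr_lie b 0 (d (L (a, i))) a k
    rw [add_comm b a, zero_add] at t
    rw [hL.repr_lie_of_lt a _ _ hk, t] at h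
    push_cast at h
    linear_combination h
  have h1 : ((i : ℂ) + q) * X 1 = (k + q) * X 0 := by simpa using E 0 1
  have h2 : ((i : ℂ) + 2 * q) * X 0 = (k + 2 * q) * X 1 := by
    have h := E 1 (-1)
    norm_num at h
    linear_combination -h
  have hlt : (k + q) * (k + 2 * q) < (i + q) * (i + 2 * q) := Nat.mul_lt_mul'' (by omega) (by omega)
  have X0 : X 0 = 0 := by
    have hz : (((i + q) * (i + 2 * q) : ℕ) - ((k + q) * (k + 2 * q) : ℕ) : ℂ) * X 0 = 0 := by
      push_cast
      linear_combination ((i : ℂ) + q) * h2 + ((k : ℂ) + 2 * q) * h1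
    refine (mul_eq_zero.mp hz).resolve_left (sub_ne_zero.mpr ?_)
    exact_mod_cast hlt.ne'
  by_cases hα : α = 0
  · subst hα
    exact X0
  · have h3 : ((α : ℂ) * ((i + q : ℕ) : ℂ)) * X α = 0 := by
      push_cast
      simpa [X0] using E 0 α
    refine (mul_eq_zero.mp h3).resolve_left (mul_ne_zero (by exact_mod_cast hα) ?_)
    exact_mod_cast (show i + q ≠ 0 by omega)

theorem derivation_basis_eq_smul (hL : IsBlockBasis q L)
    (hd : ∀ x y : B, d ⁅x, y⁆ = ⁅d x, y⁆ + ⁅x, d y⁆)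
    (hgrade : ∀ β : ℤ, (blockGrade L β).map d ≤ blockGrade L β)
    (hfilt : ∀ j : ℕ, (blockFilt L j).map d ≤ blockFilt L j) (β : ℤ) (j : ℕ) :
    d (L (β, j)) = diagCoeff L d β j • L (β, j) := by
  have hβ : d (L (β, j)) ∈ blockGrade L β :=
    hgrade β (Submodule.mem_map_of_mem (Submodule.subset_span ⟨j, rfl⟩))
  have hj : d (L (β, j)) ∈ blockFilt L j :=
    hfilt j (Submodule.mem_map_of_mem (Submodule.subset_span ⟨β, j, le_rfl, rfl⟩))
  refine L.repr.injective (Finsupp.ext fun ⟨γ, k⟩ => ?_)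
  rw [map_smul, L.repr_self, Finsupp.smul_apply, Finsupp.single_apply]
  by_cases hγ : γ = β
  · subst hγ
    rcases lt_trichotomy k j with hk | rfl | hk
    · simp [hL.repr_derivation_eq_zero_of_lt hd γ hk, hk.ne']
    · simp [diagCoeff]
    · simp [repr_eq_zero_of_mem_blockFilt hj γ hk, hk.ne]
  · simp [repr_eq_zero_of_mem_blockGrade hβ hγ, Ne.symm hγ]

end IsBlockBasis

end

theorem block_derivation_degree_zero_general (q : ℕ) (hq : 0 < q)
    (L : Module.Basis (ℤ × ℕ) ℂ B)
    (hL : ∀ (α β : ℤ) (i j : ℕ),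
      ⁅L (α, i), L (β, j)⁆ =
        (((β * ((i : ℤ) + q) - α * ((j : ℤ) + q)) : ℤ) : ℂ) • L (α + β, i + j))
    (d : B →ₗ[ℂ] B) (hd : ∀ x y : B, d ⁅x, y⁆ = ⁅d x, y⁆ + ⁅x, d y⁆)
    (hdeg : HasDegree L d 0)
    (hi : ∀ j : ℕ, (blockFilt L j).map d ≤ blockFilt L (0 + j))
    (D₀ : B →ₗ[ℂ] B)
    (hD₀ : ∀ (β : ℤ) (j : ℕ), D₀ (L (β, j)) = (j : ℂ) • L (β, j)) :
    ∃ (u : B) (lam : ℂ), d = (LieAlgebra.ad ℂ B u : B →ₗ[ℂ] B) + lam • D₀ := by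
  have hL : IsBlockBasis q L := hL
  have hgrade : ∀ β : ℤ, (blockGrade L β).map d ≤ blockGrade L β := fun β => by
    simpa using hdeg.2 β
  have hfilt : ∀ j : ℕ, (blockFilt L j).map d ≤ blockFilt L j := fun j => by simpa using hi j
  refine ⟨(diagCoeff L d 1 0 / q) • L (0, 0), diagCoeff L d 0 1, L.ext fun ⟨β, j⟩ => ?_⟩
  rw [hL.derivation_basis_eq_smul hd hgrade hfilt, (hL.blockAdditive_diagCoeff hd).eq_linear hq,
    LinearMap.add_apply, LinearMap.smul_apply, hD₀, LieAlgebra.ad_apply, smul_lie, hL 0 β 0 j,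
    zero_add, zero_add, smul_smul, smul_smul, ← add_smul]
  have hq' : (q : ℂ) ≠ 0 := by exact_mod_cast hq.ne'
  congr 1
  push_cast
  field_simp
  ring

/-- Let `d` be a nonzero derivation of the Block type Lie algebra `B(q)` of degree
`0`, and suppose the minimal integer `i` with `d(B^{[j]}) ⊆ B^{[i+j]}` for all
`j ∈ ℤ_{≥0}` equals `0`.  Then `d = ad_u + λ D₀` for some `u ∈ B(q)` and
`λ ∈ ℂ`, where `D₀` is the derivation determined by `D₀(L_{β,j}) = j L_{β,j}`. -/
theorem block_derivation_degree_zero (q : ℕ) (hq : 0 < q)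
    (L : Module.Basis (ℤ × ℕ) ℂ B)
    (hL : ∀ (α β : ℤ) (i j : ℕ),
      ⁅L (α, i), L (β, j)⁆ =
        (((β * ((i : ℤ) + q) - α * ((j : ℤ) + q)) : ℤ) : ℂ) • L (α + β, i + j))
    (d : B →ₗ[ℂ] B) (hd : ∀ x y : B, d ⁅x, y⁆ = ⁅d x, y⁆ + ⁅x, d y⁆)
    (hdeg : HasDegree L d 0)
    (hi : ∀ j : ℕ, (blockFilt L j).map d ≤ blockFilt L (0 + j))
    (hmin : ∀ i' : ℤ, (∀ j : ℕ, (blockFilt L j).map d ≤ blockFilt L (i' + j)) → 0 ≤ i')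
    (D₀ : B →ₗ[ℂ] B)
    (hD₀ : ∀ (β : ℤ) (j : ℕ), D₀ (L (β, j)) = (j : ℂ) • L (β, j)) :
    ∃ (u : B) (lam : ℂ), d = (LieAlgebra.ad ℂ B u : B →ₗ[ℂ] B) + lam • D₀ :=
  block_derivation_degree_zero_general q hq L hL d hd hdeg hi D₀ hD₀
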